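/- arXiv:2405.14285 — 2 statements merged into one kernel-verified Lean document; each statement's English description precedes it below -/
import Mathlib

section
/- Let (x_n)_{n≥0} be a sequence of nonnegative real numbers, a ≥ 0 and γ > 0, and suppose that for all n ≥ 0: x_{n+1} ≤ a e^{−γn} Σ_{k=0}^n x_k. Then for all n ≥ 0: Σ_{k=0}^n x_k ≤ x_0 · exp(a/(1 − e^{−γ})), and consequently x_{n+1} ≤ a x_0 · exp(a/(1 − e^{−γ})) · e^{−γn}; in particular x_n decays exponentially in n. -/
/-- if `(x_n)` is a nonnegative real sequence, `a ≥ 0`, `γ > 0` and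
`x_{n+1} ≤ a e^{−γn} ∑_{k=0}^n x_k` for all `n`, then the partial sums are bounded by
`x₀ exp(a/(1 − e^{−γ}))` and consequently
`x_{n+1} ≤ a x₀ exp(a/(1 − e^{−γ})) e^{−γn}`: `x_n` decays exponentially. -/
theorem discrete_gronwall_exponential (x : ℕ → ℝ) (hx : ∀ n, 0 ≤ x n)
    (a γ : ℝ) (ha : 0 ≤ a) (hγ : 0 < γ)
    (hrec : ∀ n : ℕ, x (n + 1) ≤ a * Real.exp (-γ * n) * ∑ k ∈ Finset.range (n + 1), x k) :
    ∀ n : ℕ,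
      (∑ k ∈ Finset.range (n + 1), x k) ≤ x 0 * Real.exp (a / (1 - Real.exp (-γ))) ∧
      x (n + 1) ≤ a * x 0 * Real.exp (a / (1 - Real.exp (-γ))) * Real.exp (-γ * n) := by
  have hr1 : Real.exp (-γ) < 1 := by
    rw [Real.exp_lt_one_iff]; linarith
  have hr0 : 0 < Real.exp (-γ) := Real.exp_pos _
  have hdenom : 0 < 1 - Real.exp (-γ) := by linarith
  have hSnonneg : ∀ n, 0 ≤ ∑ k ∈ Finset.range (n + 1), x k := fun n =>
    Finset.sum_nonneg fun k _ => hx k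
  -- geometric sum bound
  have hgeom : ∀ n : ℕ, (∑ k ∈ Finset.range n, Real.exp (-γ * k)) ≤ 1 / (1 - Real.exp (-γ)) := by
    intro n
    have heq : ∀ k : ℕ, Real.exp (-γ * k) = (Real.exp (-γ)) ^ k := by
      intro k; rw [← Real.exp_nat_mul]; ring_nf
    have hpow : 0 ≤ (Real.exp (-γ)) ^ n := pow_nonneg hr0.le n
    calc (∑ k ∈ Finset.range n, Real.exp (-γ * k))
        = ∑ k ∈ Finset.range n, (Real.exp (-γ)) ^ k :=
          Finset.sum_congr rfl fun k _ => heq k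
      _ = (1 - (Real.exp (-γ)) ^ n) / (1 - Real.exp (-γ)) := by
          rw [geom_sum_eq (by linarith), div_eq_div_iff (by linarith) (by linarith)]; ring
      _ ≤ 1 / (1 - Real.exp (-γ)) := by gcongr; linarith
  -- inductive bound: S_n ≤ x 0 * exp (a * ∑_{k<n} e^{-γk})
  have key : ∀ n : ℕ, (∑ k ∈ Finset.range (n + 1), x k) ≤
      x 0 * Real.exp (a * ∑ k ∈ Finset.range n, Real.exp (-γ * k)) := by
    intro n
    induction n with
    | zero => simp
    | succ m ih =>
        have hstep : (∑ k ∈ Finset.range (m + 2), x k)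
            ≤ (∑ k ∈ Finset.range (m + 1), x k) * (1 + a * Real.exp (-γ * m)) := by
          rw [Finset.sum_range_succ]
          have := hrec m
          nlinarith [hSnonneg m]
        have hprod : (∑ k ∈ Finset.range (m + 1), x k) * (1 + a * Real.exp (-γ * m))
            ≤ x 0 * Real.exp (a * ∑ k ∈ Finset.range m, Real.exp (-γ * k))
              * Real.exp (a * Real.exp (-γ * m)) := by
          have h1 : (1 : ℝ) + a * Real.exp (-γ * m) ≤ Real.exp (a * Real.exp (-γ * m)) := by
            have := Real.add_one_le_exp (a * Real.exp (-γ * m))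
            linarith
          have h2 : 0 ≤ 1 + a * Real.exp (-γ * m) := by positivity
          exact mul_le_mul ih h1 h2 (mul_nonneg (hx 0) (Real.exp_pos _).le)
        calc (∑ k ∈ Finset.range (m + 2), x k)
            ≤ _ := hstep
          _ ≤ _ := hprod
          _ = x 0 * Real.exp (a * ∑ k ∈ Finset.range (m + 1), Real.exp (-γ * k)) := by
              rw [Finset.sum_range_succ, mul_add, Real.exp_add]; ring
  have sumbound : ∀ n : ℕ, (∑ k ∈ Finset.range (n + 1), x k)
      ≤ x 0 * Real.exp (a / (1 - Real.exp (-γ))) := by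
    intro n
    refine (key n).trans ?_
    have : a * (∑ k ∈ Finset.range n, Real.exp (-γ * k)) ≤ a / (1 - Real.exp (-γ)) := by
      calc a * (∑ k ∈ Finset.range n, Real.exp (-γ * k))
          ≤ a * (1 / (1 - Real.exp (-γ))) := by
            exact mul_le_mul_of_nonneg_left (hgeom n) ha
        _ = a / (1 - Real.exp (-γ)) := by ring
    exact mul_le_mul_of_nonneg_left (Real.exp_le_exp.mpr this) (hx 0)
  intro n
  refine ⟨sumbound n, ?_⟩
  calc x (n + 1) ≤ a * Real.exp (-γ * n) * ∑ k ∈ Finset.range (n + 1), x k := hrec n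
    _ ≤ a * Real.exp (-γ * n) * (x 0 * Real.exp (a / (1 - Real.exp (-γ)))) := by
        exact mul_le_mul_of_nonneg_left (sumbound n) (by positivity)
    _ = a * x 0 * Real.exp (a / (1 - Real.exp (-γ))) * Real.exp (-γ * n) := by ring
end

section
/- Let H be a Hurwitz real d×d matrix (every complex eigenvalue of H has strictly negative real part) and let O be a real d×d matrix. Then: (a) the Sylvester (Lyapunov) equation HW + WHᵀ + O = 0 has a unique solution W; (b) there exists α₀ > 0 such that for all 0 < α ≤ α₀ the series W^{(α)} := α Σ_{k=0}^∞ (I + αH)^k O ((I + αH)ᵀ)^k converges and satisfies the discrete-time Sylvester equation (I + αH) W^{(α)} (I + αH)ᵀ − W^{(α)} + αO = 0; and (c) there exists C > 0 such that ‖W^{(α)} − W‖ ≤ Cα for all 0 < α ≤ α₀. -/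
open Matrix Filter Topology

/-!
For small `α > 0` the Hurwitz condition puts the spectrum of `1 + α H` in a disc of radius
`< 1`. Gelfand's formula at one step size `α₀`, together with writing `1 + α H` as a convex
combination of `1 + α₀ H` and `1`, gives `‖(1 + α H) ^ k‖ ≤ K (1 - c α) ^ k` uniformly in
`α ≤ α₀`. Hence the discrete equation `A X Aᵀ - X + Y = 0`, `A = 1 + α H`, has the unique
solution `∑ Aᵏ Y (Aᵀ)ᵏ`, of norm `O(‖Y‖ / α)`. A solution `W` of the continuous equation solves
the discrete one up to the forcing `α² H W Hᵀ`, so `‖W^{(α)} - W‖ = O(α)`; for `O = 0` this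
forces `W = 0`, which gives uniqueness, and existence follows in finite dimension.
-/

section DiscreteSylvester

theorem mul_tsum_pow_mul_mul_pow_mul_sub_add_eq_zero {R : Type*} [Ring R] [TopologicalSpace R]
    [IsTopologicalRing R] [T2Space R] {a b : R} (y : R)
    (hs : Summable fun k : ℕ => a ^ k * y * b ^ k) :
    a * (∑' k : ℕ, a ^ k * y * b ^ k) * b - ∑' k : ℕ, a ^ k * y * b ^ k + y = 0 := by
  have hshift : HasSum (fun k : ℕ => a ^ (k + 1) * y * b ^ (k + 1))
      (a * (∑' k : ℕ, a ^ k * y * b ^ k) * b) :=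
    ((hs.hasSum.mul_left a).mul_right b).congr_fun fun k => by
      rw [pow_succ', pow_succ]; simp only [mul_assoc]
  rw [hshift.unique ((hasSum_nat_add_iff' 1).mpr hs.hasSum), Finset.sum_range_one]
  simp

variable {R : Type*} [NormedRing R] {a b : R} {K r : ℝ}

theorem norm_pow_mul_mul_pow_le (ha : ∀ k : ℕ, ‖a ^ k‖ ≤ K * r ^ k)
    (hb : ∀ k : ℕ, ‖b ^ k‖ ≤ K * r ^ k) (y : R) (k : ℕ) :
    ‖a ^ k * y * b ^ k‖ ≤ K * K * ‖y‖ * (r ^ 2) ^ k :=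
  calc ‖a ^ k * y * b ^ k‖ ≤ ‖a ^ k‖ * ‖y‖ * ‖b ^ k‖ := norm_mul₃_le
    _ ≤ K * r ^ k * ‖y‖ * (K * r ^ k) := by
      gcongr
      exacts [mul_nonneg ((norm_nonneg _).trans (ha k)) (norm_nonneg y), ha k, hb k]
    _ = K * K * ‖y‖ * (r ^ 2) ^ k := by ring

variable (ha : ∀ k : ℕ, ‖a ^ k‖ ≤ K * r ^ k) (hb : ∀ k : ℕ, ‖b ^ k‖ ≤ K * r ^ k)
    (hr₀ : 0 ≤ r) (hr₁ : r < 1)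
include ha hb hr₀ hr₁

theorem norm_tsum_pow_mul_mul_pow_le (y : R) :
    ‖∑' k : ℕ, a ^ k * y * b ^ k‖ ≤ K * K * ‖y‖ / (1 - r ^ 2) := by
  rw [div_eq_mul_inv]
  exact tsum_of_norm_bounded
    ((hasSum_geometric_of_lt_one (by positivity) (by nlinarith)).mul_left _)
    (norm_pow_mul_mul_pow_le ha hb y)

theorem eq_zero_of_mul_mul_eq_self {x : R} (hx : a * x * b = x) : x = 0 := by
  have hiter (k : ℕ) : a ^ k * x * b ^ k = x := by
    induction k with
    | zero => simp
    | succ k ih =>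
      calc a ^ (k + 1) * x * b ^ (k + 1) = a ^ k * (a * x * b) * b ^ k := by
            rw [pow_succ, pow_succ']; simp only [mul_assoc]
        _ = x := by rw [hx, ih]
  have hlim : Tendsto (fun k : ℕ => K * K * ‖x‖ * (r ^ 2) ^ k) atTop (𝓝 0) := by
    simpa using (tendsto_pow_atTop_nhds_zero_of_lt_one (by positivity) (by nlinarith)).const_mul
      (K * K * ‖x‖)
  refine norm_le_zero_iff.mp (ge_of_tendsto' hlim fun k => ?_)
  simpa only [hiter] using norm_pow_mul_mul_pow_le ha hb x k

variable [CompleteSpace R]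

theorem summable_pow_mul_mul_pow (y : R) : Summable fun k : ℕ => a ^ k * y * b ^ k :=
  .of_norm_bounded ((summable_geometric_of_lt_one (by positivity) (by nlinarith)).mul_left _)
    (norm_pow_mul_mul_pow_le ha hb y)

theorem eq_tsum_of_mul_mul_sub_add_eq_zero {x y : R} (hx : a * x * b - x + y = 0) :
    x = ∑' k : ℕ, a ^ k * y * b ^ k := by
  have hS := mul_tsum_pow_mul_mul_pow_mul_sub_add_eq_zero y
    (summable_pow_mul_mul_pow ha hb hr₀ hr₁ y)
  refine sub_eq_zero.mp (eq_zero_of_mul_mul_eq_self ha hb hr₀ hr₁ ?_)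
  rw [mul_sub, sub_mul]
  linear_combination (norm := abel) hx - hS

theorem norm_le_of_mul_mul_sub_add_eq_zero {x y : R} (hx : a * x * b - x + y = 0) :
    ‖x‖ ≤ K * K * ‖y‖ / (1 - r ^ 2) :=
  eq_tsum_of_mul_mul_sub_add_eq_zero ha hb hr₀ hr₁ hx ▸
    norm_tsum_pow_mul_mul_pow_le ha hb hr₀ hr₁ y

end DiscreteSylvester

theorem nonpos_of_forall_le_mul {x C α₀ : ℝ} (hα₀ : 0 < α₀)
    (h : ∀ α, 0 < α → α ≤ α₀ → x ≤ C * α) : x ≤ 0 := by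
  have hlim : Tendsto (fun α => C * α) (𝓝[>] 0) (𝓝 0) := by
    simpa using ((continuous_const_mul C).tendsto 0).mono_left nhdsWithin_le_nhds
  exact ge_of_tendsto hlim (by
    filter_upwards [Ioc_mem_nhdsGT hα₀] with α hα using h α hα.1 hα.2)

section Spectral

variable {A : Type*} [NormedRing A] [NormedAlgebra ℂ A] [CompleteSpace A]

theorem exists_norm_pow_le_of_spectralRadius_lt {a : A} {ρ : ℝ} (hρ : 0 < ρ)
    (h : spectralRadius ℂ a < ENNReal.ofReal ρ) : ∃ K, ∀ n : ℕ, ‖a ^ n‖ ≤ K * ρ ^ n := by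
  have hev : ∀ᶠ n : ℕ in atTop, ‖a ^ n‖ ≤ ‖ρ ^ n‖ := by
    filter_upwards
      [(spectrum.pow_norm_pow_one_div_tendsto_nhds_spectralRadius a).eventually_lt_const h,
        eventually_ge_atTop 1] with n hn hn1
    have hn' := ((ENNReal.ofReal_lt_ofReal_iff hρ).mp hn).le
    rwa [one_div, Real.rpow_inv_le_iff_of_pos (norm_nonneg _) hρ.le (by positivity),
      Real.rpow_natCast, ← abs_of_pos (pow_pos hρ n)] at hn'
  obtain ⟨K, hK⟩ := (Asymptotics.isBigO_nat_atTop_iff fun n hn =>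
    absurd hn (pow_ne_zero n hρ.ne')).mp (Asymptotics.IsBigO.of_bound' hev)
  exact ⟨K, fun n => by simpa [abs_of_pos hρ] using hK n⟩

theorem norm_one_add_ofReal_mul_le {z : ℂ} {α m R : ℝ} (hre : z.re ≤ -m) (hz : ‖z‖ ≤ R)
    (hα : 0 ≤ α) (hαR : α * R ^ 2 ≤ m) : ‖1 + α * z‖ ≤ 1 - α * m / 2 := by
  have hsq : ‖1 + α * z‖ ^ 2 ≤ 1 - α * m := by
    have hz2 : z.re * z.re + z.im * z.im ≤ R ^ 2 := by
      rw [← Complex.normSq_apply, ← Complex.sq_norm]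
      exact pow_le_pow_left₀ (norm_nonneg z) hz 2
    rw [Complex.sq_norm, Complex.normSq_apply]
    simp only [Complex.add_re, Complex.one_re, Complex.mul_re, Complex.ofReal_re,
      Complex.ofReal_im, Complex.add_im, Complex.one_im, Complex.mul_im]
    nlinarith [mul_le_mul_of_nonneg_left hz2 (mul_nonneg hα hα)]
  have hpos : 0 ≤ 1 - α * m / 2 := by nlinarith [sq_nonneg ‖1 + α * z‖]
  exact (pow_le_pow_iff_left₀ (norm_nonneg _) hpos two_ne_zero).mp
    (by nlinarith [sq_nonneg (α * m)])

theorem exists_spectralRadius_one_add_smul_lt (a : A) (h : ∀ z ∈ spectrum ℂ a, z.re < 0) :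
    ∃ α > (0 : ℝ), ∃ ρ, 0 < ρ ∧ ρ < 1 ∧
      spectralRadius ℂ (1 + (α : ℂ) • a) < ENNReal.ofReal ρ := by
  obtain ⟨m, hm, hmσ⟩ := (spectrum.isCompact a).exists_forall_le' (f := fun z => -z.re)
    Complex.continuous_re.neg.continuousOn fun z hz => neg_pos.mpr (h z hz)
  set R := ‖a‖ * ‖(1 : A)‖
  set α := m / (R ^ 2 + m ^ 2)
  have hα : 0 < α := by positivity
  have hαR : α * R ^ 2 ≤ m := by
    rw [div_mul_eq_mul_div, div_le_iff₀ (by positivity)]; nlinarith [sq_nonneg m]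
  have hαm : α * m ≤ 1 := by
    rw [div_mul_eq_mul_div, div_le_one (by positivity)]; nlinarith [sq_nonneg R]
  have hσ : ∀ z ∈ spectrum ℂ (1 + (α : ℂ) • a), ‖z‖ ≤ 1 - α * m / 2 := by
    intro z hz
    have hα0 : (α : ℂ) ≠ 0 := by exact_mod_cast hα.ne'
    set w := (z - 1) / α
    have hzw : z = α * w + 1 := by rw [mul_div_cancel₀ _ hα0]; ring
    rw [hzw, ← map_one (algebraMap ℂ A), spectrum.add_mem_add_iff] at hz
    have hw : w ∈ spectrum ℂ a := spectrum.smul_mem_smul_iff (r := Units.mk0 (α : ℂ) hα0).mp hz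
    rw [hzw, add_comm]
    exact norm_one_add_ofReal_mul_le (by linarith [hmσ w hw])
      (mem_closedBall_zero_iff.mp (spectrum.subset_closedBall_norm_mul a hw)) hα.le hαR
  refine ⟨α, hα, 1 - α * m / 4, by nlinarith, by nlinarith, ?_⟩
  calc spectralRadius ℂ (1 + (α : ℂ) • a) ≤ ENNReal.ofReal (1 - α * m / 2) := by
        refine iSup₂_le fun z hz => ?_
        rw [← ENNReal.ofReal_coe_nnreal, coe_nnnorm]
        exact ENNReal.ofReal_le_ofReal (hσ z hz)
    _ < ENNReal.ofReal (1 - α * m / 4) :=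
        (ENNReal.ofReal_lt_ofReal_iff (by nlinarith)).mpr (by nlinarith)

end Spectral

theorem norm_pow_smul_add_one_sub_smul_one_le {A : Type*} [NormedRing A] [NormedAlgebra ℝ A]
    {b : A} {K ρ t : ℝ} (hb : ∀ n : ℕ, ‖b ^ n‖ ≤ K * ρ ^ n) (ht₀ : 0 ≤ t) (ht₁ : t ≤ 1)
    (n : ℕ) : ‖(t • b + (1 - t) • (1 : A)) ^ n‖ ≤ K * (t * ρ + (1 - t)) ^ n := by
  have ht₁' : 0 ≤ 1 - t := sub_nonneg.mpr ht₁
  have hcomm : Commute (t • b) ((1 - t) • (1 : A)) := (Commute.one_right _).smul_right _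
  rw [hcomm.add_pow, add_pow, Finset.mul_sum]
  refine (norm_sum_le _ _).trans (Finset.sum_le_sum fun i _ => ?_)
  have hterm : (t • b) ^ i * ((1 - t) • (1 : A)) ^ (n - i) * (n.choose i : A)
      = (t ^ i * (1 - t) ^ (n - i) * n.choose i) • b ^ i := by
    rw [← map_natCast (algebraMap ℝ A), ← Algebra.commutes, ← Algebra.smul_def]
    simp only [smul_pow, one_pow, mul_smul_comm, mul_one, smul_smul]
    ring_nf
  rw [hterm, norm_smul, Real.norm_of_nonneg (by positivity)]
  calc t ^ i * (1 - t) ^ (n - i) * n.choose i * ‖b ^ i‖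
      ≤ t ^ i * (1 - t) ^ (n - i) * n.choose i * (K * ρ ^ i) := by gcongr; exact hb i
    _ = K * ((t * ρ) ^ i * (1 - t) ^ (n - i) * n.choose i) := by ring

section FrobeniusNorm

attribute [local instance] Matrix.frobeniusNormedAddCommGroup Matrix.frobeniusNormedRing
  Matrix.frobeniusNormedAlgebra Matrix.frobeniusNormedSpace

theorem Matrix.norm_entry_le_frobenius_norm {m n : Type*} [Fintype m] [Fintype n]
    (A : Matrix m n ℝ) (i : m) (j : n) : ‖A i j‖ ≤ ‖A‖ :=
  calc ‖A i j‖ ≤ ‖WithLp.toLp 2 (A i)‖ := PiLp.norm_apply_le (WithLp.toLp 2 (A i)) j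
    _ ≤ ‖A‖ := PiLp.norm_apply_le (WithLp.toLp 2 fun i => WithLp.toLp 2 (A i)) i

theorem Matrix.frobenius_norm_transpose_pow {n : Type*} [Fintype n] [DecidableEq n]
    (A : Matrix n n ℝ) (k : ℕ) : ‖Aᵀ ^ k‖ = ‖A ^ k‖ := by
  rw [← transpose_pow, frobenius_norm_transpose]

theorem Matrix.exists_norm_pow_one_add_smul_le {n : Type*} [Fintype n] [DecidableEq n]
    (H : Matrix n n ℝ) (hH : ∀ z ∈ spectrum ℂ (H.map Complex.ofReal), z.re < 0) :
    ∃ α₀ > (0 : ℝ), ∃ c > (0 : ℝ), c * α₀ ≤ 1 ∧ ∃ K, ∀ α : ℝ, 0 < α → α ≤ α₀ →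
      ∀ k : ℕ, ‖(1 + α • H) ^ k‖ ≤ K * (1 - c * α) ^ k := by
  obtain ⟨α₀, hα₀, ρ, hρ₀, hρ₁, hρ⟩ :=
    exists_spectralRadius_one_add_smul_lt (H.map Complex.ofReal) hH
  obtain ⟨K, hK⟩ := exists_norm_pow_le_of_spectralRadius_lt hρ₀ hρ
  have hmap : (1 + α₀ • H).map Complex.ofReal = 1 + (α₀ : ℂ) • H.map Complex.ofReal := by
    ext i j
    by_cases hij : i = j <;> simp [hij, Complex.real_smul]
  have hpow (k : ℕ) : ‖(1 + α₀ • H) ^ k‖ ≤ K * ρ ^ k := by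
    have hmk : ((1 + α₀ • H) ^ k).map Complex.ofReal = ((1 + α₀ • H).map Complex.ofReal) ^ k :=
      map_pow Complex.ofRealHom.mapMatrix _ k
    rw [← frobenius_norm_map_eq _ _ Complex.norm_real, hmk, hmap]
    exact hK k
  refine ⟨α₀, hα₀, (1 - ρ) / α₀, div_pos (by linarith) hα₀, ?_, K, fun α hα hαle k => ?_⟩
  · rw [div_mul_cancel₀ _ hα₀.ne']; linarith
  have hsplit : 1 + α • H = (α / α₀) • (1 + α₀ • H) + (1 - α / α₀) • (1 : Matrix n n ℝ) := by
    rw [smul_add, smul_smul, div_mul_cancel₀ _ hα₀.ne']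
    module
  have hrate : 1 - (1 - ρ) / α₀ * α = α / α₀ * ρ + (1 - α / α₀) := by ring
  rw [hsplit, hrate]
  exact norm_pow_smul_add_one_sub_smul_one_le hpow (by positivity)
    ((div_le_one hα₀).mpr hαle) k

theorem Matrix.one_add_smul_mul_mul_transpose_sub_add_smul {n R : Type*} [Fintype n]
    [DecidableEq n] [CommRing R] {H W O : Matrix n n R} (hW : H * W + W * Hᵀ + O = 0) (α : R) :
    (1 + α • H) * W * (1 + α • H)ᵀ - W + α • O = (α * α) • (H * W * Hᵀ) := by
  simp only [transpose_add, transpose_one, transpose_smul, add_mul, mul_add, one_mul, mul_one,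
    smul_mul_assoc, mul_smul_comm]
  linear_combination (norm := module) α • hW

theorem Matrix.existsUnique_lyapunov_of_injective {K n : Type*} [Field K] [Fintype n]
    {H : Matrix n n K} (h : ∀ W, H * W + W * Hᵀ = 0 → W = 0) (O : Matrix n n K) :
    ∃! W, H * W + W * Hᵀ + O = 0 := by
  let L := LinearMap.mulLeft K H + LinearMap.mulRight K Hᵀ
  have hL : Function.Injective L := by
    rw [← LinearMap.ker_eq_bot, LinearMap.ker_eq_bot']
    exact h
  simpa [L, eq_neg_iff_add_eq_zero] using
    Function.Bijective.existsUnique ⟨hL, LinearMap.injective_iff_surjective.mp hL⟩ (-O)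

theorem Matrix.norm_le_mul_of_one_add_smul_mul_mul_transpose_sub_add_eq_zero {n : Type*}
    [Fintype n] [DecidableEq n] {H X M : Matrix n n ℝ} {α c K : ℝ} (hα : 0 < α) (hc : 0 < c)
    (hcα : c * α ≤ 1) (hpow : ∀ k : ℕ, ‖(1 + α • H) ^ k‖ ≤ K * (1 - c * α) ^ k)
    (hX : (1 + α • H) * X * (1 + α • H)ᵀ - X + (α * α) • M = 0) :
    ‖X‖ ≤ K * K * ‖M‖ / c * α :=
  calc ‖X‖ ≤ K * K * ‖(α * α) • M‖ / (1 - (1 - c * α) ^ 2) :=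
        norm_le_of_mul_mul_sub_add_eq_zero hpow
          (fun k => (frobenius_norm_transpose_pow _ k).trans_le (hpow k)) (by linarith)
          (by nlinarith) hX
    _ ≤ K * K * ‖(α * α) • M‖ / (c * α) :=
        div_le_div_of_nonneg_left (mul_nonneg (mul_self_nonneg K) (norm_nonneg _))
          (by positivity) (by nlinarith [mul_pos hc hα])
    _ = K * K * ‖M‖ / c * α := by
        rw [norm_smul, Real.norm_of_nonneg (by positivity)]
        field_simp

/-- for a Hurwitz matrix `H` and any matrix `O`:
(a) the Lyapunov equation `HW + WHᵀ + O = 0` has a unique solution `W`;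
(b) for small `α` the series `W^{(α)} = α ∑_k (I+αH)^k O ((I+αH)ᵀ)^k` converges and
solves the discrete-time Sylvester equation
`(I+αH) W^{(α)} (I+αH)ᵀ − W^{(α)} + αO = 0`;
(c) `‖W^{(α)} − W‖ ≤ C α` (stated entrywise). -/
theorem lyapunov_discrete_vs_continuous {d : ℕ} (H O : Matrix (Fin d) (Fin d) ℝ)
    (hH : ∀ z ∈ spectrum ℂ (H.map Complex.ofReal), z.re < 0) :
    (∃! W : Matrix (Fin d) (Fin d) ℝ, H * W + W * Hᵀ + O = 0) ∧
    ∃ α₀ > (0 : ℝ), ∃ C > (0 : ℝ), ∀ α : ℝ, 0 < α → α ≤ α₀ →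
      Summable (fun k : ℕ => α • ((1 + α • H) ^ k * O * ((1 + α • H)ᵀ) ^ k)) ∧
      (1 + α • H) * (∑' k : ℕ, α • ((1 + α • H) ^ k * O * ((1 + α • H)ᵀ) ^ k))
          * (1 + α • H)ᵀ
        - (∑' k : ℕ, α • ((1 + α • H) ^ k * O * ((1 + α • H)ᵀ) ^ k)) + α • O = 0 ∧
      ∀ W : Matrix (Fin d) (Fin d) ℝ, H * W + W * Hᵀ + O = 0 →
        ∀ i j, |((∑' k : ℕ, α • ((1 + α • H) ^ k * O * ((1 + α • H)ᵀ) ^ k) :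
            Matrix (Fin d) (Fin d) ℝ)) i j - W i j| ≤ C * α := by
  obtain ⟨α₀, hα₀, c, hc, hcα₀, K, hpow⟩ := H.exists_norm_pow_one_add_smul_le hH
  have hcα {α : ℝ} (hα : 0 < α) (hαle : α ≤ α₀) : 0 < c * α ∧ c * α ≤ 1 :=
    ⟨by positivity, by nlinarith⟩
  have hsmall {α : ℝ} (hα : 0 < α) (hαle : α ≤ α₀) {X M : Matrix (Fin d) (Fin d) ℝ}
      (hX : (1 + α • H) * X * (1 + α • H)ᵀ - X + (α * α) • M = 0) : ‖X‖ ≤ K * K * ‖M‖ / c * α :=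
    norm_le_mul_of_one_add_smul_mul_mul_transpose_sub_add_eq_zero hα hc (hcα hα hαle).2
      (hpow α hα hαle) hX
  have hinj (W : Matrix (Fin d) (Fin d) ℝ) (hW : H * W + W * Hᵀ = 0) : W = 0 :=
    norm_le_zero_iff.mp <| nonpos_of_forall_le_mul hα₀ fun α hα hαle =>
      hsmall hα hαle (M := -(H * W * Hᵀ)) <| by
        linear_combination (norm := module)
          one_add_smul_mul_mul_transpose_sub_add_smul (O := 0) (by rwa [add_zero]) α
  obtain ⟨W₀, hW₀, huniq⟩ := existsUnique_lyapunov_of_injective hinj O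
  refine ⟨⟨W₀, hW₀, huniq⟩, α₀, hα₀, K * K * ‖H * W₀ * Hᵀ‖ / c + 1,
    add_pos_of_nonneg_of_pos (div_nonneg (mul_nonneg (mul_self_nonneg K) (norm_nonneg _)) hc.le)
      one_pos,
    fun α hα hαle => ?_⟩
  have hterm : (fun k : ℕ => α • ((1 + α • H) ^ k * O * (1 + α • H)ᵀ ^ k))
      = fun k => (1 + α • H) ^ k * (α • O) * (1 + α • H)ᵀ ^ k := by
    funext k
    rw [mul_smul_comm, smul_mul_assoc]
  have hsum := summable_pow_mul_mul_pow (hpow α hα hαle)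
    (fun k => (frobenius_norm_transpose_pow _ k).trans_le (hpow α hα hαle k))
    (by linarith [(hcα hα hαle).2]) (by linarith [(hcα hα hαle).1]) (α • O)
  have hS := mul_tsum_pow_mul_mul_pow_mul_sub_add_eq_zero (α • O) hsum
  rw [hterm]
  refine ⟨hsum, hS, fun W hW i j => ?_⟩
  rw [huniq W hW]
  set S := ∑' k : ℕ, (1 + α • H) ^ k * (α • O) * (1 + α • H)ᵀ ^ k
  have hdiff : ‖S - W₀‖ ≤ K * K * ‖H * W₀ * Hᵀ‖ / c * α := by
    refine hsmall hα hαle ?_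
    rw [mul_sub, sub_mul]
    linear_combination (norm := module) hS - one_add_smul_mul_mul_transpose_sub_add_smul hW₀ α
  calc |S i j - W₀ i j| ≤ ‖S - W₀‖ := norm_entry_le_frobenius_norm (S - W₀) i j
    _ ≤ (K * K * ‖H * W₀ * Hᵀ‖ / c + 1) * α :=
        hdiff.trans (mul_le_mul_of_nonneg_right (by linarith) hα.le)

end FrobeniusNorm
end
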